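/- Let (α₁, β₁) and (α₂, β₂) be two pairs of real parameters with (α₁, β₁) ≠ (α₂, β₂) and not both α₁ = 0 and α₂ = 0. Then the two functions x ↦ σ(α₁ x + β₁) and x ↦ σ(α₂ x + β₂) from ℝ to ℝ are linearly independent. -/

import Mathlib

/-!
Clearing denominators turns `c₁ σ(α₁x + β₁) + c₂ σ(α₂x + β₂) = 0` into the vanishing of the
exponential sum `(c₁ + c₂) + c₂ e^{-β₁} e^{-α₁x} + c₁ e^{-β₂} e^{-α₂x}`. Sampled at `x = 0, 1, 2`
this is a relation `S + P uⁿ + Q vⁿ = 0` for `n = 0, 1, 2`, and the annihilating polynomial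
`(X - 1)(X - v)` of the other two terms isolates `P (u - 1)(u - v) = 0`. So the coefficient of an
exponential whose rate differs from the other rate and from `0` vanishes. For equal slopes
`α₁ = α₂ ≠ 0` this gives `c₂ e^{-β₁} + c₁ e^{-β₂} = 0` and `c₁ + c₂ = 0`, which force `c₁ = 0`
because `β₁ ≠ β₂`. In every case one of `c₁, c₂` vanishes, and then so does the other as `σ > 0`.
-/

noncomputable def sigmoid (z : ℝ) : ℝ := 1 / (1 + Real.exp (-z))

open Real (exp)

theorem eq_zero_of_forall_add_mul_pow {R : Type*} [CommRing R] [NoZeroDivisors R]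
    {S P Q u v : R} (hu : u ≠ 1) (huv : u ≠ v) (h : ∀ n : ℕ, S + P * u ^ n + Q * v ^ n = 0) :
    P = 0 := by
  have hP : P * ((u - 1) * (u - v)) = 0 := by
    linear_combination h 2 - (v + 1) * h 1 + v * h 0
  simpa [sub_ne_zero.2 hu, sub_ne_zero.2 huv] using hP

theorem eq_zero_of_forall_add_mul_exp {S P Q a b : ℝ} (ha : a ≠ 0) (hab : a ≠ b)
    (h : ∀ x : ℝ, S + P * exp (a * x) + Q * exp (b * x) = 0) : P = 0 :=
  eq_zero_of_forall_add_mul_pow (u := exp a) (v := exp b) (by simpa using ha)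
    (Real.exp_injective.ne hab) fun n => by simpa [← Real.exp_nat_mul, mul_comm] using h n

theorem sigmoid_eq_real_sigmoid : sigmoid = Real.sigmoid := by
  funext z
  rw [sigmoid, Real.sigmoid_def, one_div]

theorem eq_zero_of_mul_sigmoid_eq_zero {c z : ℝ} (h : c * sigmoid z = 0) : c = 0 :=
  (mul_eq_zero.1 h).resolve_right (sigmoid_eq_real_sigmoid ▸ Real.sigmoid_pos z).ne'

theorem mul_sigmoid_add_mul_sigmoid_eq_zero_iff (c₁ c₂ z₁ z₂ : ℝ) :
    c₁ * sigmoid z₁ + c₂ * sigmoid z₂ = 0 ↔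
      c₁ + c₂ + c₂ * exp (-z₁) + c₁ * exp (-z₂) = 0 := by
  unfold sigmoid
  field_simp
  constructor <;> intro h <;> linear_combination h

/-- Two sigmoid functions with distinct parameter pairs (not both degenerate, i.e. not both
internal weights zero) are linearly independent. -/
theorem sigmoid_linearly_independent (α₁ β₁ α₂ β₂ : ℝ)
    (hne : (α₁, β₁) ≠ (α₂, β₂)) (hα : ¬(α₁ = 0 ∧ α₂ = 0)) :
    ∀ c₁ c₂ : ℝ,
      (∀ x : ℝ, c₁ * sigmoid (α₁ * x + β₁) + c₂ * sigmoid (α₂ * x + β₂) = 0) →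
      c₁ = 0 ∧ c₂ = 0 := by
  intro c₁ c₂ h
  have hexp : ∀ x : ℝ, c₁ + c₂ + c₂ * exp (-β₁) * exp (-α₁ * x)
      + c₁ * exp (-β₂) * exp (-α₂ * x) = 0 := fun x => by
    have := (mul_sigmoid_add_mul_sigmoid_eq_zero_iff _ _ _ _).1 (h x)
    simp only [neg_add, Real.exp_add, ← neg_mul] at this
    linear_combination this
  suffices c₁ = 0 ∨ c₂ = 0 by
    rcases this with rfl | rfl
    · exact ⟨rfl, eq_zero_of_mul_sigmoid_eq_zero (by simpa using h 0)⟩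
    · exact ⟨eq_zero_of_mul_sigmoid_eq_zero (by simpa using h 0), rfl⟩
  rcases eq_or_ne α₁ α₂ with rfl | hα₁₂
  · have hα₁ : α₁ ≠ 0 := fun h0 => hα ⟨h0, h0⟩
    have hβ : exp (-β₂) ≠ exp (-β₁) := by simpa [eq_comm] using hne
    have hP : c₂ * exp (-β₁) + c₁ * exp (-β₂) = 0 :=
      eq_zero_of_forall_add_mul_exp (S := c₁ + c₂) (Q := 0) (b := 0) (neg_ne_zero.2 hα₁)
        (by simpa using hα₁) fun x => by linear_combination hexp x
    have hS : c₁ + c₂ = 0 := by simpa [hP, add_assoc, ← add_mul] using hexp 0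
    have hc₁ : c₁ * (exp (-β₂) - exp (-β₁)) = 0 := by
      linear_combination hP - exp (-β₁) * hS
    exact .inl <| (mul_eq_zero.1 hc₁).resolve_right (sub_ne_zero.2 hβ)
  · rcases ne_or_eq α₁ 0 with hα₁ | rfl
    · have := eq_zero_of_forall_add_mul_exp (neg_ne_zero.2 hα₁) (neg_injective.ne hα₁₂) hexp
      exact .inr <| (mul_eq_zero.1 this).resolve_right (Real.exp_ne_zero _)
    · have := eq_zero_of_forall_add_mul_exp (S := c₁ + c₂) (P := c₁ * exp (-β₂))
        (Q := c₂ * exp (-β₁)) (neg_ne_zero.2 hα₁₂.symm) (neg_injective.ne hα₁₂.symm)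
        fun x => by linear_combination hexp x
      exact .inl <| (mul_eq_zero.1 this).resolve_right (Real.exp_ne_zero _)
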